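/- Let n ≥ 1, let L_1, …, L_n be nonzero real numbers, let X_1, …, X_{2n} be the anisotropic Heisenberg vector fields on ℝ^{2n+1}, and let w_1, …, w_{2n} be the weights w_j = 1/(2|L_j|) for 1 ≤ j ≤ n and w_j = 1/(2|L_{j−n}|) for n+1 ≤ j ≤ 2n. Define ρ(x_1,…,x_{2n},t) = ( (Σ_{j=1}^{n} 2|L_j| x_j² + Σ_{j=n+1}^{2n} 2|L_{j−n}| x_j²)² + 16 t² )^{1/4}. Then ρ satisfies the weighted infinite Laplace equation Δ_∞ ρ = Σ_{i=1}^{2n} Σ_{j=1}^{2n} w_i w_j X_i(X_j ρ) · X_i ρ · X_j ρ = 0 at every point of ℝ^{2n+1} \ {0}. -/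

import Mathlib

/-!
Write `A = s² + 16 t²` with `s = Σ 2|λ_j| x_j²`, so that `ρ = A^{1/4}`, and let `twist_j` be the
`∂_t`-coefficient of `X_j`. For `ρ = φ ∘ A` the infinity Laplacian obeys the chain rule
`Δ_∞ (φ ∘ A) = φ'(A)³ Δ_∞ A + φ''(A) φ'(A)² |∇A|⁴`, where `|∇A|² = Σ w_j (X_j A)²`.
The pairing `j ↔ j ± n` gives `Σ x_j twist_j = 0` and `Σ w_j twist_j² = s/4`, hence
`|∇A|² = 16 s A`; then `Δ_∞ A = ½ ⟨∇A, ∇|∇A|²⟩ = 192 s² A`. For `φ = (·)^{1/4}` the two terms of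
the chain rule are `±3 s² A^{-5/4}`.
-/

/-- Partial derivative of `f : ℝ^m → ℝ` in the `i`-th coordinate direction. -/
noncomputable def pderiv' {m : ℕ} (i : Fin m) (f : (Fin m → ℝ) → ℝ) (q : Fin m → ℝ) : ℝ :=
  fderiv ℝ f q (Pi.single i 1)

/-- The anisotropic Heisenberg vector fields on ℝ^{2n+1}. -/
noncomputable def X (n : ℕ) (L : Fin n → ℝ) (j : Fin (2*n))
    (f : (Fin (2*n+1) → ℝ) → ℝ) (q : Fin (2*n+1) → ℝ) : ℝ :=
  pderiv' ⟨(j : ℕ), by have := j.isLt; omega⟩ f q +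
    (if h : (j : ℕ) < n then
        -(L ⟨(j : ℕ), h⟩) * q ⟨(j : ℕ) + n, by have := j.isLt; omega⟩
      else
        (L ⟨(j : ℕ) - n, by have := j.isLt; omega⟩) * q ⟨(j : ℕ) - n, by have := j.isLt; omega⟩) *
      pderiv' ⟨2*n, by omega⟩ f q

/-- The weights `w_j = 1/(2|L_j|)` for `1 ≤ j ≤ n` and `w_j = 1/(2|L_{j−n}|)` for
`n+1 ≤ j ≤ 2n`. -/
noncomputable def wgt (n : ℕ) (L : Fin n → ℝ) (j : Fin (2*n)) : ℝ :=
  if h : (j : ℕ) < n then 1 / (2 * |L ⟨(j : ℕ), h⟩|)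
  else 1 / (2 * |L ⟨(j : ℕ) - n, by have := j.isLt; omega⟩|)

/-- `M(f) = (Σ_{j=1}^{2n} w_j (X_j f)²)^{1/2}`. -/
noncomputable def Mfun (n : ℕ) (L : Fin n → ℝ) (f : (Fin (2*n+1) → ℝ) → ℝ)
    (q : Fin (2*n+1) → ℝ) : ℝ :=
  Real.sqrt (∑ j : Fin (2*n), wgt n L j * (X n L j f q)^2)

/-- The gauge `ρ = ((Σ_{j=1}^{n} 2|L_j| x_j² + Σ_{j=n+1}^{2n} 2|L_{j−n}| x_j²)² + 16 t²)^{1/4}`. -/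
noncomputable def rho (n : ℕ) (L : Fin n → ℝ) (q : Fin (2*n+1) → ℝ) : ℝ :=
  ((∑ j : Fin (2*n),
      (if h : (j : ℕ) < n then 2 * |L ⟨(j : ℕ), h⟩|
       else 2 * |L ⟨(j : ℕ) - n, by have := j.isLt; omega⟩|) *
        (q ⟨(j : ℕ), by have := j.isLt; omega⟩)^2)^2
    + 16 * (q ⟨2*n, by omega⟩)^2) ^ ((1:ℝ)/4)

open Filter Topology Finset

section DerivAlong

variable {E : Type*} [NormedAddCommGroup E] [NormedSpace ℝ E]

noncomputable def derivAlong (V : E → E) (f : E → ℝ) (x : E) : ℝ := fderiv ℝ f x (V x)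

variable {V W : E → E} {f g : E → ℝ} {x : E}

theorem derivAlong_congr (h : f =ᶠ[𝓝 x] g) : derivAlong V f x = derivAlong V g x := by
  rw [derivAlong, derivAlong, h.fderiv_eq]

@[simp]
theorem derivAlong_const (c : ℝ) : derivAlong V (fun _ => c) x = 0 := by
  simp [derivAlong]

theorem derivAlong_const_mul (hf : DifferentiableAt ℝ f x) (c : ℝ) :
    derivAlong V (fun y => c * f y) x = c * derivAlong V f x := by
  simp [derivAlong, fderiv_const_mul hf]

theorem derivAlong_add (hf : DifferentiableAt ℝ f x) (hg : DifferentiableAt ℝ g x) :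
    derivAlong V (fun y => f y + g y) x = derivAlong V f x + derivAlong V g x := by
  simp [derivAlong, fderiv_fun_add hf hg]

theorem derivAlong_mul (hf : DifferentiableAt ℝ f x) (hg : DifferentiableAt ℝ g x) :
    derivAlong V (fun y => f y * g y) x = derivAlong V f x * g x + f x * derivAlong V g x := by
  simp [derivAlong, fderiv_fun_mul hf hg]
  ring

theorem derivAlong_pow (hf : DifferentiableAt ℝ f x) (m : ℕ) :
    derivAlong V (fun y => f y ^ m) x = m * f x ^ (m - 1) * derivAlong V f x := by
  simp [derivAlong, fderiv_fun_pow m hf]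

theorem derivAlong_sum {ι : Type*} (s : Finset ι) {F : ι → E → ℝ}
    (hF : ∀ i ∈ s, DifferentiableAt ℝ (F i) x) :
    derivAlong V (fun y => ∑ i ∈ s, F i y) x = ∑ i ∈ s, derivAlong V (F i) x := by
  simp [derivAlong, fderiv_fun_sum hF]

theorem derivAlong_apply {ι : Type*} [Fintype ι] (V : (ι → ℝ) → ι → ℝ) (i : ι)
    (x : ι → ℝ) : derivAlong V (fun y => y i) x = V x i := by
  simp [derivAlong, (hasFDerivAt_apply i x).fderiv]

theorem derivAlong_comp {φ : ℝ → ℝ} {φ' : ℝ} (hφ : HasDerivAt φ φ' (f x))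
    (hf : DifferentiableAt ℝ f x) :
    derivAlong V (fun y => φ (f y)) x = φ' * derivAlong V f x := by
  rw [derivAlong, derivAlong, ← Function.comp_def, (hφ.comp_hasFDerivAt x hf.hasFDerivAt).fderiv]
  simp

theorem derivAlong_derivAlong_comp {φ φ' : ℝ → ℝ} {φ'' : ℝ}
    (hφ : ∀ᶠ y in 𝓝 x, HasDerivAt φ (φ' (f y)) (f y)) (hφ' : HasDerivAt φ' φ'' (f x))
    (hf : ∀ᶠ y in 𝓝 x, DifferentiableAt ℝ f y)
    (hVf : DifferentiableAt ℝ (derivAlong V f) x) :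
    derivAlong W (derivAlong V (fun y => φ (f y))) x =
      φ'' * derivAlong W f x * derivAlong V f x + φ' (f x) * derivAlong W (derivAlong V f) x := by
  have hfx := hf.self_of_nhds
  have hchain :
      derivAlong V (fun y => φ (f y)) =ᶠ[𝓝 x] fun y => φ' (f y) * derivAlong V f y := by
    filter_upwards [hφ, hf] with y hφy hfy using derivAlong_comp hφy hfy
  have hφ'f : DifferentiableAt ℝ (fun y => φ' (f y)) x := hφ'.differentiableAt.comp x hfx
  rw [derivAlong_congr hchain, derivAlong_mul hφ'f hVf,
    derivAlong_comp hφ' hfx]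

end DerivAlong

section InfLaplacian

variable {E : Type*} [NormedAddCommGroup E] [NormedSpace ℝ E] {ι : Type*} [Fintype ι]
  (V : ι → E → E) (w : ι → ℝ)

noncomputable def weightedInfLaplacian (u : E → ℝ) (x : E) : ℝ :=
  ∑ i, ∑ j, w i * w j * derivAlong (V i) (derivAlong (V j) u) x *
    derivAlong (V i) u x * derivAlong (V j) u x

noncomputable def weightedGradNormSq (u : E → ℝ) (x : E) : ℝ :=
  ∑ j, w j * derivAlong (V j) u x ^ 2

variable {V w} {u : E → ℝ} {x : E}

theorem derivAlong_weightedGradNormSq {W : E → E}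
    (hVu : ∀ j, DifferentiableAt ℝ (derivAlong (V j) u) x) :
    derivAlong W (weightedGradNormSq V w u) x =
      2 * ∑ j, w j * derivAlong (V j) u x * derivAlong W (derivAlong (V j) u) x := by
  unfold weightedGradNormSq
  rw [derivAlong_sum (F := fun j y => w j * derivAlong (V j) u y ^ 2) _
    fun j _ => ((hVu j).pow 2).const_mul (w j), mul_sum]
  refine sum_congr rfl fun j _ => ?_
  rw [derivAlong_const_mul (f := fun y => derivAlong (V j) u y ^ 2) ((hVu j).pow 2),
    derivAlong_pow (hVu j)]
  ring

theorem weightedInfLaplacian_eq (hVu : ∀ j, DifferentiableAt ℝ (derivAlong (V j) u) x) :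
    weightedInfLaplacian V w u x =
      1 / 2 * ∑ i, w i * derivAlong (V i) u x *
        derivAlong (V i) (weightedGradNormSq V w u) x := by
  simp only [derivAlong_weightedGradNormSq hVu, weightedInfLaplacian, mul_sum]
  refine sum_congr rfl fun i _ => sum_congr rfl fun j _ => ?_
  ring

theorem weightedInfLaplacian_comp {φ φ' : ℝ → ℝ} {φ'' : ℝ}
    (hφ : ∀ᶠ y in 𝓝 x, HasDerivAt φ (φ' (u y)) (u y)) (hφ' : HasDerivAt φ' φ'' (u x))
    (hu : ∀ᶠ y in 𝓝 x, DifferentiableAt ℝ u y)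
    (hVu : ∀ j, DifferentiableAt ℝ (derivAlong (V j) u) x) :
    weightedInfLaplacian V w (fun y => φ (u y)) x =
      φ' (u x) ^ 3 * weightedInfLaplacian V w u x +
        φ'' * φ' (u x) ^ 2 * weightedGradNormSq V w u x ^ 2 := by
  have hfirst : ∀ j, derivAlong (V j) (fun y => φ (u y)) x = φ' (u x) * derivAlong (V j) u x :=
    fun j => derivAlong_comp hφ.self_of_nhds hu.self_of_nhds
  rw [sq (weightedGradNormSq V w u x), weightedGradNormSq, sum_mul_sum]
  simp only [weightedInfLaplacian, hfirst, derivAlong_derivAlong_comp hφ hφ' hu (hVu _), mul_sum,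
    ← sum_add_distrib]
  refine sum_congr rfl fun i _ => sum_congr rfl fun j _ => ?_
  ring

theorem weightedInfLaplacian_rpow (p : ℝ) (hu : ∀ᶠ y in 𝓝 x, DifferentiableAt ℝ u y)
    (hux : 0 < u x) (hVu : ∀ j, DifferentiableAt ℝ (derivAlong (V j) u) x) :
    weightedInfLaplacian V w (fun y => u y ^ p) x =
      (p * u x ^ (p - 1)) ^ 3 * weightedInfLaplacian V w u x +
        p * ((p - 1) * u x ^ (p - 1 - 1)) * (p * u x ^ (p - 1)) ^ 2 *
          weightedGradNormSq V w u x ^ 2 := by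
  have hpos : ∀ᶠ y in 𝓝 x, 0 < u y :=
    continuousAt_const.eventually_lt hu.self_of_nhds.continuousAt hux
  refine weightedInfLaplacian_comp (φ := fun y => y ^ p) (φ' := fun y => p * y ^ (p - 1)) ?_
    ((Real.hasDerivAt_rpow_const (Or.inl hux.ne')).const_mul p) hu hVu
  filter_upwards [hpos] with y hy using Real.hasDerivAt_rpow_const (Or.inl hy.ne')

end InfLaplacian

theorem Fintype.sum_eq_zero_of_involutive {ι M : Type*} [Fintype ι] [AddCommGroup M]
    [IsAddTorsionFree M] {σ : ι → ι} (hσ : Function.Involutive σ) {f : ι → M}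
    (hf : ∀ i, f (σ i) = -f i) : ∑ i, f i = 0 := by
  rw [← self_eq_neg, ← sum_neg_distrib, ← Equiv.sum_comp (hσ.toPerm σ)]
  simp [hf]

namespace AnisotropicHeisenberg

variable {n : ℕ}

def partner (j : Fin (2 * n)) : Fin (2 * n) :=
  if h : (j : ℕ) < n then ⟨j + n, by omega⟩ else ⟨j - n, by omega⟩

def sign (j : Fin (2 * n)) : ℝ := if (j : ℕ) < n then -1 else 1

theorem val_partner (j : Fin (2 * n)) :
    (partner j : ℕ) = if (j : ℕ) < n then j + n else j - n := by
  unfold partner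
  split_ifs <;> rfl

theorem partner_involutive : Function.Involutive (partner (n := n)) := fun j => by
  ext
  simp only [val_partner]
  split_ifs <;> omega

theorem sign_partner (j : Fin (2 * n)) : sign (partner j) = -sign j := by
  unfold sign
  rw [val_partner]
  split_ifs <;> first | omega | norm_num

variable (L : Fin n → ℝ)

def lam (j : Fin (2 * n)) : ℝ :=
  if h : (j : ℕ) < n then L ⟨j, h⟩ else L ⟨j - n, by omega⟩

theorem lam_partner (j : Fin (2 * n)) : lam L (partner j) = lam L j := by
  unfold lam
  simp only [val_partner]
  split_ifs <;> first | omega | (congr 1 <;> simp)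

def twist (j : Fin (2 * n)) (q : Fin (2 * n + 1) → ℝ) : ℝ :=
  sign j * lam L j * q (partner j).castSucc

def vectorField (j : Fin (2 * n)) (q : Fin (2 * n + 1) → ℝ) : Fin (2 * n + 1) → ℝ :=
  Pi.single j.castSucc 1 + twist L j q • Pi.single (Fin.last (2 * n)) 1

theorem X_eq_derivAlong (j : Fin (2 * n)) : X n L j = derivAlong (vectorField L j) := by
  funext f q
  have htwist : (if h : (j : ℕ) < n then -L ⟨j, h⟩ * q ⟨j + n, by omega⟩
      else L ⟨j - n, by omega⟩ * q ⟨j - n, by omega⟩) = twist L j q := by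
    unfold twist sign lam partner
    split_ifs <;> simp
  simp only [X, pderiv', derivAlong, vectorField, map_add, map_smul, smul_eq_mul, htwist]
  rfl

theorem vectorField_apply_castSucc (j k : Fin (2 * n)) (q : Fin (2 * n + 1) → ℝ) :
    vectorField L j q k.castSucc = if k = j then 1 else 0 := by
  simp [vectorField, Pi.single_apply, Fin.castSucc_ne_last]

theorem vectorField_apply_last (j : Fin (2 * n)) (q : Fin (2 * n + 1) → ℝ) :
    vectorField L j q (Fin.last (2 * n)) = twist L j q := by
  simp [vectorField, (Fin.castSucc_ne_last j).symm]

def coef (j : Fin (2 * n)) : ℝ := 2 * |lam L j|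

def horizQuad (q : Fin (2 * n + 1) → ℝ) : ℝ := ∑ j, coef L j * q j.castSucc ^ 2

def gaugeQuartic (q : Fin (2 * n + 1) → ℝ) : ℝ :=
  horizQuad L q ^ 2 + 16 * q (Fin.last (2 * n)) ^ 2

theorem rho_eq : rho n L = fun q => gaugeQuartic L q ^ (1 / 4 : ℝ) := by
  funext q
  unfold rho gaugeQuartic horizQuad coef lam
  congr 3
  refine sum_congr rfl fun j _ => ?_
  split_ifs <;> rfl

theorem differentiable_horizQuad : Differentiable ℝ (horizQuad L) := by
  unfold horizQuad
  fun_prop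

theorem differentiable_gaugeQuartic : Differentiable ℝ (gaugeQuartic L) := by
  unfold gaugeQuartic
  have := differentiable_horizQuad L
  fun_prop

theorem derivAlong_horizQuad (j : Fin (2 * n)) (q : Fin (2 * n + 1) → ℝ) :
    derivAlong (vectorField L j) (horizQuad L) q = 2 * coef L j * q j.castSucc := by
  unfold horizQuad
  simp (disch := first | fun_prop | intro _ _; fun_prop) only [derivAlong_sum,
    derivAlong_const_mul, derivAlong_pow, derivAlong_apply, vectorField_apply_castSucc]
  simp
  ring

theorem derivAlong_gaugeQuartic (j : Fin (2 * n)) :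
    derivAlong (vectorField L j) (gaugeQuartic L) = fun q =>
      4 * coef L j * horizQuad L q * q j.castSucc + 32 * q (Fin.last (2 * n)) * twist L j q := by
  funext q
  have := differentiable_horizQuad L
  unfold gaugeQuartic
  simp (disch := fun_prop) only [derivAlong_add, derivAlong_const_mul, derivAlong_pow,
    derivAlong_horizQuad, derivAlong_apply, vectorField_apply_last]
  push_cast
  ring

theorem differentiable_derivAlong_gaugeQuartic (j : Fin (2 * n)) :
    Differentiable ℝ (derivAlong (vectorField L j) (gaugeQuartic L)) := by
  rw [derivAlong_gaugeQuartic]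
  have := differentiable_horizQuad L
  unfold twist
  fun_prop

theorem sum_castSucc_mul_twist (q : Fin (2 * n + 1) → ℝ) :
    ∑ j, q j.castSucc * twist L j q = 0 :=
  Fintype.sum_eq_zero_of_involutive partner_involutive fun j => by
    simp only [twist, sign_partner, lam_partner, partner_involutive j]
    ring

theorem wgt_eq_inv_coef (j : Fin (2 * n)) : wgt n L j = (coef L j)⁻¹ := by
  unfold wgt coef lam
  split_ifs <;> simp

theorem wgt_mul_lam_sq (j : Fin (2 * n)) : wgt n L j * lam L j ^ 2 = coef L j / 4 := by
  rw [wgt_eq_inv_coef, coef, ← sq_abs]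
  rcases eq_or_ne |lam L j| 0 with h | h
  · simp [h]
  · field_simp
    ring

theorem sum_wgt_mul_twist_sq (q : Fin (2 * n + 1) → ℝ) :
    ∑ j, wgt n L j * twist L j q ^ 2 = horizQuad L q / 4 := by
  have hterm : ∀ j, wgt n L j * twist L j q ^ 2 =
      coef L (partner j) / 4 * q (partner j).castSucc ^ 2 := fun j => by
    have hsign : sign j ^ 2 = 1 := by unfold sign; split_ifs <;> norm_num
    rw [twist, mul_pow, mul_pow, hsign, one_mul, ← mul_assoc, wgt_mul_lam_sq, coef, coef,
      lam_partner]
  rw [sum_congr rfl fun j _ => hterm j, horizQuad, sum_div]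
  refine (Equiv.sum_comp (partner_involutive.toPerm _)
    fun k => coef L k / 4 * q k.castSucc ^ 2).trans (sum_congr rfl fun j _ => ?_)
  ring

variable {L}

theorem lam_ne_zero (hL : ∀ k, L k ≠ 0) (j : Fin (2 * n)) : lam L j ≠ 0 := by
  unfold lam
  split_ifs <;> exact hL _

theorem coef_pos (hL : ∀ k, L k ≠ 0) (j : Fin (2 * n)) : 0 < coef L j := by
  have := abs_pos.mpr (lam_ne_zero hL j)
  unfold coef
  positivity

theorem wgt_mul_coef (hL : ∀ k, L k ≠ 0) (j : Fin (2 * n)) : wgt n L j * coef L j = 1 := by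
  rw [wgt_eq_inv_coef, inv_mul_cancel₀ (coef_pos hL j).ne']

theorem sum_castSucc_mul_derivAlong_gaugeQuartic (q : Fin (2 * n + 1) → ℝ) :
    ∑ j, q j.castSucc * derivAlong (vectorField L j) (gaugeQuartic L) q =
      4 * horizQuad L q ^ 2 := by
  have hterm : ∀ j, q j.castSucc * derivAlong (vectorField L j) (gaugeQuartic L) q =
      4 * horizQuad L q * (coef L j * q j.castSucc ^ 2) +
        32 * q (Fin.last (2 * n)) * (q j.castSucc * twist L j q) := fun j => by
    rw [derivAlong_gaugeQuartic]
    ring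
  rw [sum_congr rfl fun j _ => hterm j, sum_add_distrib, ← mul_sum, ← mul_sum,
    sum_castSucc_mul_twist, ← horizQuad]
  ring

theorem weightedGradNormSq_gaugeQuartic (hL : ∀ k, L k ≠ 0) :
    weightedGradNormSq (vectorField L) (wgt n L) (gaugeQuartic L) =
      fun q => 16 * horizQuad L q * gaugeQuartic L q := by
  funext q
  have hterm : ∀ j, wgt n L j * derivAlong (vectorField L j) (gaugeQuartic L) q ^ 2 =
      16 * horizQuad L q ^ 2 * (coef L j * q j.castSucc ^ 2) +
        256 * horizQuad L q * q (Fin.last (2 * n)) * (q j.castSucc * twist L j q) +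
        1024 * q (Fin.last (2 * n)) ^ 2 * (wgt n L j * twist L j q ^ 2) := fun j => by
    rw [derivAlong_gaugeQuartic]
    linear_combination (16 * horizQuad L q ^ 2 * coef L j * q j.castSucc ^ 2 +
      256 * horizQuad L q * q (Fin.last (2 * n)) * q j.castSucc * twist L j q) *
        wgt_mul_coef hL j
  rw [weightedGradNormSq, sum_congr rfl fun j _ => hterm j, sum_add_distrib, sum_add_distrib,
    ← mul_sum, ← mul_sum, ← mul_sum, ← horizQuad, sum_castSucc_mul_twist,
    sum_wgt_mul_twist_sq, gaugeQuartic]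
  ring

theorem weightedInfLaplacian_gaugeQuartic (hL : ∀ k, L k ≠ 0) (q : Fin (2 * n + 1) → ℝ) :
    weightedInfLaplacian (vectorField L) (wgt n L) (gaugeQuartic L) q =
      192 * horizQuad L q ^ 2 * gaugeQuartic L q := by
  have := differentiable_horizQuad L
  have := differentiable_gaugeQuartic L
  set g := fun i => derivAlong (vectorField L i) (gaugeQuartic L) q
  have hgrad : ∀ i,
      derivAlong (vectorField L i)
        (weightedGradNormSq (vectorField L) (wgt n L) (gaugeQuartic L)) q =
        16 * (2 * coef L i * q i.castSucc * gaugeQuartic L q + horizQuad L q * g i) := fun i => by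
    rw [weightedGradNormSq_gaugeQuartic hL]
    simp (disch := fun_prop) only [derivAlong_mul, derivAlong_const, derivAlong_horizQuad]
    ring
  have hterm : ∀ i, wgt n L i * g i *
      derivAlong (vectorField L i)
        (weightedGradNormSq (vectorField L) (wgt n L) (gaugeQuartic L)) q =
        32 * gaugeQuartic L q * (q i.castSucc * g i) + 16 * horizQuad L q * (wgt n L i * g i ^ 2) :=
    fun i => by
      rw [hgrad]
      linear_combination (32 * gaugeQuartic L q * q i.castSucc * g i) * wgt_mul_coef hL i
  rw [weightedInfLaplacian_eq
      fun j => (differentiable_derivAlong_gaugeQuartic L j).differentiableAt,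
    sum_congr rfl fun i _ => hterm i, sum_add_distrib, ← mul_sum, ← mul_sum,
    sum_castSucc_mul_derivAlong_gaugeQuartic, ← weightedGradNormSq,
    weightedGradNormSq_gaugeQuartic hL]
  ring

theorem gaugeQuartic_pos (hL : ∀ k, L k ≠ 0) {q : Fin (2 * n + 1) → ℝ} (hq : q ≠ 0) :
    0 < gaugeQuartic L q := by
  obtain ⟨k, hk⟩ := Function.ne_iff.mp hq
  rw [Pi.zero_apply] at hk
  induction k using Fin.lastCases with
  | last =>
    unfold gaugeQuartic
    positivity
  | cast j =>
    have hj : 0 < coef L j * q j.castSucc ^ 2 := by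
      have := coef_pos hL j
      positivity
    have : 0 < horizQuad L q :=
      hj.trans_le (single_le_sum (f := fun i => coef L i * q i.castSucc ^ 2)
        (fun i _ => mul_nonneg (coef_pos hL i).le (sq_nonneg _)) (mem_univ j))
    unfold gaugeQuartic
    positivity

end AnisotropicHeisenberg

open AnisotropicHeisenberg

theorem rho_weighted_infinite_harmonic_general
    (n : ℕ) (L : Fin n → ℝ) (hL : ∀ j, L j ≠ 0) :
    ∀ q : Fin (2*n+1) → ℝ, q ≠ 0 →
      ∑ i : Fin (2*n), ∑ j : Fin (2*n),
        wgt n L i * wgt n L j * X n L i (X n L j (rho n L)) q *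
          X n L i (rho n L) q * X n L j (rho n L) q = 0 := by
  intro q hq
  have hA := gaugeQuartic_pos hL hq
  simp only [X_eq_derivAlong]
  change weightedInfLaplacian (vectorField L) (wgt n L) (rho n L) q = 0
  rw [rho_eq, weightedInfLaplacian_rpow _ (.of_forall (differentiable_gaugeQuartic L)) hA
      fun j => (differentiable_derivAlong_gaugeQuartic L j).differentiableAt,
    weightedInfLaplacian_gaugeQuartic hL, weightedGradNormSq_gaugeQuartic hL,
    Real.rpow_sub_one hA.ne' (1 / 4 - 1)]
  field_simp
  ring

theorem rho_weighted_infinite_harmonic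
    (n : ℕ) (hn : 1 ≤ n) (L : Fin n → ℝ) (hL : ∀ j, L j ≠ 0) :
    ∀ q : Fin (2*n+1) → ℝ, q ≠ 0 →
      ∑ i : Fin (2*n), ∑ j : Fin (2*n),
        wgt n L i * wgt n L j * X n L i (X n L j (rho n L)) q *
          X n L i (rho n L) q * X n L j (rho n L) q = 0 :=
  rho_weighted_infinite_harmonic_general n L hL
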